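/- (Warfield) Let G be a module over Z_p (the integers localized at a prime p) with decomposition bases X and Y. Then for every equivalence class e of Ulm sequences, the cardinality of {x ∈ X : U(x) ∈ e} equals the cardinality of {y ∈ Y : U(y) ∈ e}; i.e. the Warfield invariant w(e,G) is independent of the choice of decomposition basis. -/

import Mathlib

noncomputable section

namespace UlmW

universe u

variable {R : Type*} [CommRing R]

/-- The submodule `p^α M`, defined by transfinite recursion on `α`. -/
def ppow {M : Type u} [AddCommGroup M] [Module R M] (p : R) (α : Ordinal.{u}) :
    Submodule R M :=
  Ordinal.limitRecOn α ⊤ (fun _ S => Submodule.map (LinearMap.lsmul R M p) S)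
    fun β _ ih => ⨅ (γ : Set.Iio β), ih γ.1 γ.2

open scoped Classical in
/-- The `p`-height of `x`, with `⊤` playing the role of `∞`. -/
def pheight {M : Type u} [AddCommGroup M] [Module R M] (p : R) (x : M) :
    WithTop Ordinal.{u} :=
  if h : ∃ α : Ordinal.{u}, x ∈ ppow p α ∧ x ∉ ppow p (α + 1) then (h.choose : WithTop Ordinal)
  else ⊤

/-- `H⁰ = {x : ∃ a ≠ 0, a • x ∈ H}`. -/
def hull {M : Type u} [AddCommGroup M] [Module R M] (H : Submodule R M) : Set M :=
  {x | ∃ a : R, a ≠ 0 ∧ a • x ∈ H}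

/-- `X` is a decomposition set with respect to the single prime `p`. -/
def IsDecompWrt {M : Type u} [AddCommGroup M] [Module R M] (p : R) (X : Set M) : Prop :=
  (LinearIndependent R (fun x : X => (x : M))) ∧
  (∀ x ∈ X, ∀ a : R, a ≠ 0 → a • x ≠ 0) ∧
  (∀ s : Finset M, ↑s ⊆ X → ∀ c : M → R,
    pheight p (∑ x ∈ s, c x • x) = s.inf fun x => pheight p (c x • x))

/-- `X` is a decomposition set (with respect to every prime of `R`). -/
def IsDecompositionSet (R : Type*) [CommRing R] {M : Type u} [AddCommGroup M] [Module R M]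
    (X : Set M) : Prop :=
  ∀ p : R, Prime p → IsDecompWrt p X

/-- partial decomposition basis, heights taken w.r.t. a fixed prime `p`. -/
def IsPDBWrt {M : Type u} [AddCommGroup M] [Module R M] (p : R) (C : Set (Set M)) : Prop :=
  C.Nonempty ∧ (∀ X ∈ C, X.Finite) ∧ (∀ X ∈ C, IsDecompWrt p X) ∧
  ∀ X ∈ C, ∀ x : M, ∃ Y ∈ C, X ⊆ Y ∧ x ∈ hull (Submodule.span R Y)

/-- partial decomposition basis (heights w.r.t. all primes of `R`). -/
def IsPDB (R : Type*) [CommRing R] {M : Type u} [AddCommGroup M] [Module R M] (C : Set (Set M)) : Prop :=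
  C.Nonempty ∧ (∀ X ∈ C, X.Finite) ∧ (∀ X ∈ C, IsDecompositionSet R X) ∧
  ∀ X ∈ C, ∀ x : M, ∃ Y ∈ C, X ⊆ Y ∧ x ∈ hull (Submodule.span R Y)

/-- A partial isomorphism system `I : G ≅_p H`. -/
def IsPartialIsoSystem {M N : Type*} [AddCommGroup M] [Module R M]
    [AddCommGroup N] [Module R N] (I : Set (M →ₗ.[R] N)) : Prop :=
  I.Nonempty ∧
  (∀ f ∈ I, Function.Injective f.toFun) ∧
  (∀ f ∈ I, ∀ a : M, ∃ g ∈ I, f ≤ g ∧ a ∈ g.domain) ∧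
  (∀ f ∈ I, ∀ b : N, ∃ g ∈ I, f ≤ g ∧ ∃ y : g.domain, g y = b)

/-- The Ulm sequence of `x`: `U(x) = (|pⁱ x|)ᵢ`. -/
def UlmSeqOf {M : Type u} [AddCommGroup M] [Module R M] (p : R) (x : M) :
    ℕ → WithTop Ordinal.{u} :=
  fun i => pheight p ((p ^ i) • x)

/-- `u` is an Ulm sequence. -/
def IsUlmSeq (u : ℕ → WithTop Ordinal.{u}) : Prop :=
  ∀ i, (u i = ⊤ → u (i + 1) = ⊤) ∧ (u i ≠ ⊤ → u i < u (i + 1))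

/-- Equivalence of Ulm sequences. -/
def UlmEquiv (u v : ℕ → WithTop Ordinal.{u}) : Prop :=
  ∃ m n : ℕ, ∀ i, u (i + n) = v (i + m)

/-- `X` contains at least `n` elements whose Ulm sequence is equivalent to `u`. -/
def HasAtLeast {M : Type u} [AddCommGroup M] [Module R M] (p : R)
    (u : ℕ → WithTop Ordinal.{u}) (n : ℕ) (X : Set M) : Prop :=
  ∃ s : Finset M, ↑s ⊆ X ∧ n ≤ s.card ∧ ∀ x ∈ s, UlmEquiv (UlmSeqOf p x) u

/-- `ŵ_C(e,G)` where `e` is the class of the Ulm sequence `u`. -/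
def wHat {M : Type u} [AddCommGroup M] [Module R M] (p : R) (C : Set (Set M))
    (u : ℕ → WithTop Ordinal.{u}) : ℕ∞ :=
  sSup {N : ℕ∞ | ∃ n : ℕ, N = (n : ℕ∞) ∧ ∃ X ∈ C, HasAtLeast p u n X}

/-- `x` is proper with respect to `S`. -/
def IsProper {M : Type u} [AddCommGroup M] [Module R M] (p : R) (S : Submodule R M)
    (x : M) : Prop :=
  ∀ s ∈ S, pheight p (x + s) ≤ pheight p x

/-- `H` is a nice submodule. -/
def IsNice {M : Type u} [AddCommGroup M] [Module R M] (p : R) (H : Submodule R M) : Prop :=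
  ∀ x : M, ∃ h ∈ H, ∀ h' ∈ H, pheight p (x + h') ≤ pheight p (x + h)

/-- The Ulm invariant `u_p(σ, M)`: the dimension of `(p^σ M)[p]/(p^{σ+1} M)[p]`
over the residue field `R/(p)`. -/
def uCard (p : R) (M : Type u) [AddCommGroup M] [Module R M] (σ : Ordinal.{u}) :
    Cardinal :=
  let V : Submodule R M := ppow p σ ⊓ Submodule.torsionBy R M p
  let W : Submodule R V := (ppow p (σ + 1) ⊓ Submodule.torsionBy R M p).comap V.subtype
  Module.rank (R ⧸ Ideal.span {p})
    ((V ⧸ W) ⧸ (Ideal.span {p} • (⊤ : Submodule R (V ⧸ W))))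

/-- `û_p(σ, M) = min (u_p(σ, M), ω)`. -/
def uHat (p : R) (M : Type u) [AddCommGroup M] [Module R M] (σ : Ordinal.{u}) : Cardinal :=
  min (uCard p M σ) Cardinal.aleph0

/-- `û_p(∞, M) = min (dim (p^∞ M)[p], ω)`. -/
def uHatInf (p : R) (M : Type u) [AddCommGroup M] [Module R M] : Cardinal :=
  let V : Submodule R M := (⨅ α : Ordinal.{u}, ppow p α) ⊓ Submodule.torsionBy R M p
  min (Module.rank (R ⧸ Ideal.span {p})
    (V ⧸ (Ideal.span {p} • (⊤ : Submodule R V)))) Cardinal.aleph0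

end UlmW

open UlmW

/-- The ideal `(p) ⊆ ℤ` is prime. -/
instance zpSpanPrime (p : ℤ) [hp : Fact (Prime p)] : (Ideal.span {p} : Ideal ℤ).IsPrime :=
  (Ideal.span_singleton_prime hp.out.ne_zero).mpr hp.out

/-- `ℤ_(p)`, the integers localized at the prime `p`. -/
abbrev Zp (p : ℤ) [Fact (Prime p)] : Type :=
  Localization.AtPrime (Ideal.span {p} : Ideal ℤ)


universe u

open UlmW


/-!
Fix the class `e`. Each `x ∈ X` has a nonzero multiple in the span of `Y`; match `x` with the
elements of class `e` in the `Y`-support of that multiple and check Hall's condition. If it failed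
for a finite `s ⊆ X`, a rank count would give a nonzero `z = ∑ r x • x` supported on `s` whose
`Y`-expansion `z = ∑ B y • y` has no term of class `e`. By the decomposition property of `X`, the
Ulm sequence of `z` eventually agrees with that of one term `r x₀ • x₀`, the one carrying the
smallest shift of `e`. Choose `D ≠ 0` with `D • y = ∑ c y x • x` for the `Y`-terms `y`; comparing
coefficients of `x₀` in `D • z`, the ultrametric inequality gives a `y₀` with
`v (B y₀) + v (c y₀ x₀) ≤ v D + v (r x₀)`. Now `U(z) ≤ U(B y₀ • y₀)` (decomposition property of
`Y`) and `U(D • y₀) ≤ U(c y₀ x₀ • x₀)` (of `X`) squeeze a shift of `U(y₀)` between two coinciding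
shifts of `U(x₀)`, so `y₀` has class `e`: a contradiction.
-/

namespace UlmW

section Heights

variable {R : Type*} [CommRing R] {M : Type u} [AddCommGroup M] [Module R M] {p : R}

theorem ppow_zero : (ppow p 0 : Submodule R M) = ⊤ := by
  rw [ppow, Ordinal.limitRecOn_zero]

theorem ppow_succ (α : Ordinal.{u}) :
    (ppow p (α + 1) : Submodule R M) = (ppow p α).map (LinearMap.lsmul R M p) := by
  unfold ppow
  rw [Ordinal.limitRecOn_add_one]

theorem ppow_limit {α : Ordinal.{u}} (h : Order.IsSuccLimit α) :
    (ppow p α : Submodule R M) = ⨅ γ : Set.Iio α, ppow p γ.1 := by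
  unfold ppow
  rw [Ordinal.limitRecOn_limit _ _ _ _ h]

theorem smul_mem_ppow_succ {x : M} {α : Ordinal.{u}} (h : x ∈ ppow p α) :
    p • x ∈ ppow p (α + 1) := by
  rw [ppow_succ]
  exact ⟨x, h, rfl⟩

theorem ppow_antitone : Antitone (ppow p : Ordinal.{u} → Submodule R M) := by
  intro α β hαβ
  induction β using WellFoundedLT.induction with
  | _ β ih =>
    rcases hαβ.eq_or_lt with rfl | hlt
    · exact le_rfl
    rcases Ordinal.zero_or_succ_or_isSuccLimit β with rfl | ⟨γ, rfl⟩ | hβ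
    · simp at hlt
    · rw [Order.succ_eq_add_one, ppow_succ]
      rintro _ ⟨x, hx, rfl⟩
      exact Submodule.smul_mem _ _ (ih γ (Order.lt_succ γ) (Order.lt_succ_iff.mp hlt) hx)
    · rw [ppow_limit hβ]
      exact iInf_le (fun γ : Set.Iio β => (ppow p γ.1 : Submodule R M)) ⟨α, hlt⟩

theorem pheight_spec {x : M} (h : pheight p x ≠ ⊤) :
    ∃ α : Ordinal.{u}, pheight p x = α ∧ x ∈ ppow p α ∧ x ∉ ppow p (α + 1) := by
  unfold pheight at h ⊢
  split_ifs at h ⊢ with hex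
  · exact ⟨hex.choose, rfl, hex.choose_spec⟩
  · exact absurd rfl h

theorem pheight_eq_top_iff {x : M} : pheight p x = ⊤ ↔ ∀ α : Ordinal.{u}, x ∈ ppow p α := by
  refine ⟨fun h α => ?_, fun h => ?_⟩
  · have hex : ¬ ∃ β : Ordinal.{u}, x ∈ ppow p β ∧ x ∉ ppow p (β + 1) := by
      intro hex
      unfold pheight at h
      rw [dif_pos hex] at h
      exact WithTop.coe_ne_top h
    induction α using WellFoundedLT.induction with
    | _ α ih =>
      rcases Ordinal.zero_or_succ_or_isSuccLimit α with rfl | ⟨β, rfl⟩ | hα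
      · rw [ppow_zero]; trivial
      · rw [Order.succ_eq_add_one]
        by_contra hx
        exact hex ⟨β, ih β (Order.lt_succ β), hx⟩
      · rw [ppow_limit hα]
        exact Submodule.mem_iInf _ |>.mpr fun γ => ih γ.1 γ.2
  · by_contra hx
    obtain ⟨α, -, -, hα⟩ := pheight_spec hx
    exact hα (h _)

theorem coe_le_pheight_iff {x : M} {α : Ordinal.{u}} :
    (α : WithTop Ordinal.{u}) ≤ pheight p x ↔ x ∈ ppow p α := by
  by_cases hx : pheight p x = ⊤
  · simp only [hx, le_top, true_iff]
    exact pheight_eq_top_iff.mp hx α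
  obtain ⟨β, hβ, hxβ, hxβ1⟩ := pheight_spec hx
  rw [hβ, WithTop.coe_le_coe]
  refine ⟨fun h => ppow_antitone h hxβ, fun h => ?_⟩
  by_contra! hlt
  exact hxβ1 (ppow_antitone (Order.add_one_le_of_lt hlt) h)

theorem pheight_eq_of_mem_ppow_iff {x y : M} (h : ∀ α, x ∈ ppow p α ↔ y ∈ ppow p α) :
    pheight p x = pheight p y := by
  refine eq_of_forall_le_iff fun c => ?_
  induction c with
  | top => simp only [top_le_iff, pheight_eq_top_iff, h]
  | coe α => simp only [coe_le_pheight_iff, h]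

theorem pheight_unit_smul (u : Rˣ) (x : M) : pheight p ((u : R) • x) = pheight p x :=
  pheight_eq_of_mem_ppow_iff fun α =>
    ⟨fun h => by simpa using Submodule.smul_mem (ppow p α) (↑u⁻¹ : R) h,
      Submodule.smul_mem _ _⟩

theorem pheight_smul_eq_top {x : M} (h : pheight p x = ⊤) : pheight p (p • x) = ⊤ :=
  pheight_eq_top_iff.mpr fun α => Submodule.smul_mem _ _ (pheight_eq_top_iff.mp h α)

theorem pheight_lt_pheight_smul {x : M} (h : pheight p x ≠ ⊤) :
    pheight p x < pheight p (p • x) := by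
  obtain ⟨α, hα, hx, -⟩ := pheight_spec h
  calc pheight p x = α := hα
    _ < ((α + 1 : Ordinal.{u}) : WithTop Ordinal.{u}) := by
      exact_mod_cast Order.lt_add_one_iff.mpr le_rfl
    _ ≤ pheight p (p • x) := coe_le_pheight_iff.mpr (smul_mem_ppow_succ hx)

end Heights

section UlmSequences

theorem IsUlmSeq.monotone {u : ℕ → WithTop Ordinal.{u}} (hu : IsUlmSeq u) : Monotone u := by
  refine monotone_nat_of_le_succ fun i => ?_
  by_cases hi : u i = ⊤
  · rw [(hu i).1 hi]
    exact le_top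
  · exact ((hu i).2 hi).le

theorem UlmEquiv.trans {u v w : ℕ → WithTop Ordinal.{u}} (huv : UlmEquiv u v)
    (hvw : UlmEquiv v w) : UlmEquiv u w := by
  obtain ⟨m, n, h⟩ := huv
  obtain ⟨m', n', h'⟩ := hvw
  refine ⟨m + m', n + n', fun i => ?_⟩
  rw [show i + (n + n') = i + n' + n by omega, h, add_right_comm, h', add_assoc]

theorem exists_inf_eventually_eq {ι : Type*} {s : Finset ι} (hs : s.Nonempty)
    {f : ι → ℕ → WithTop Ordinal.{u}} {e : ℕ → WithTop Ordinal.{u}} (he : Monotone e)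
    (hf : ∀ x ∈ s, UlmEquiv (f x) e) :
    ∃ x₀ ∈ s, ∃ N, ∀ i, N ≤ i → s.inf (fun x => f x i) = f x₀ i := by
  choose! m n hmn using hf
  set N := s.sup n
  have hshift : ∀ x ∈ s, ∀ i, N ≤ i → f x i = e (i - N + (N - n x + m x)) := by
    intro x hx i hi
    have hnx : n x ≤ N := Finset.le_sup hx
    rw [show i = (i - n x) + n x by omega, hmn x hx]
    congr 1
    omega
  obtain ⟨x₀, hx₀, hmin⟩ := s.exists_min_image (fun x => N - n x + m x) hs
  refine ⟨x₀, hx₀, N, fun i hi => le_antisymm (Finset.inf_le hx₀) (Finset.le_inf fun x hx => ?_)⟩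
  rw [hshift x hx i hi, hshift x₀ hx₀ i hi]
  exact he (by have := hmin x hx; omega)

theorem ulmEquiv_of_squeeze {f g h : ℕ → WithTop Ordinal.{u}} (hh : Monotone h)
    {N a b c r : ℕ} (hfg : ∀ i, f i ≤ g (i + b)) (hgh : ∀ i, g (i + a) ≤ h (i + c))
    (hfh : ∀ i, N ≤ i → f i = h (i + r)) (hbc : b + c ≤ a + r) : UlmEquiv g h := by
  refine ⟨N + a + r, N + a + b, fun i => le_antisymm ?_ ?_⟩
  · calc g (i + (N + a + b)) = g (i + N + b + a) := by congr 1; omega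
      _ ≤ h (i + N + b + c) := hgh _
      _ ≤ h (i + (N + a + r)) := hh (by omega)
  · calc h (i + (N + a + r)) = f (i + N + a) := by rw [hfh _ (by omega)]; congr 1; omega
      _ ≤ g (i + N + a + b) := hfg _
      _ = g (i + (N + a + b)) := by congr 1; omega

variable {R : Type*} [CommRing R] {M : Type u} [AddCommGroup M] [Module R M] {p : R}

def ulmClassPart (p : R) (e : ℕ → WithTop Ordinal.{u}) (X : Set M) : Set M :=
  {z ∈ X | UlmEquiv (UlmSeqOf p z) e}

theorem isUlmSeq_ulmSeqOf (x : M) : IsUlmSeq (UlmSeqOf p x) := by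
  intro i
  have hsucc : UlmSeqOf p x (i + 1) = pheight p (p • (p ^ i • x)) := by
    rw [UlmSeqOf, pow_succ', mul_smul]
  rw [hsucc]
  exact ⟨pheight_smul_eq_top, pheight_lt_pheight_smul⟩

theorem ulmSeqOf_unit_mul_pow_smul (u : Rˣ) (n : ℕ) (x : M) (i : ℕ) :
    UlmSeqOf p (((u : R) * p ^ n) • x) i = UlmSeqOf p x (i + n) := by
  rw [UlmSeqOf, UlmSeqOf, smul_smul, mul_left_comm, ← pow_add, mul_smul, pheight_unit_smul]

variable {X : Set M}

theorem ulmSeqOf_linearCombination (hX : IsDecompWrt p X) {r : M →₀ R} (hr : ↑r.support ⊆ X)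
    (i : ℕ) : UlmSeqOf p (Finsupp.linearCombination R id r) i =
      r.support.inf fun x => UlmSeqOf p (r x • x) i := by
  simpa only [UlmSeqOf, Finsupp.linearCombination_apply, Finsupp.sum, Finset.smul_sum, smul_smul,
    id] using hX.2.2 r.support hr (fun x => p ^ i * r x)

theorem ulmSeqOf_linearCombination_le (hX : IsDecompWrt p X) {r : M →₀ R}
    (hr : ↑r.support ⊆ X) {x : M} (hx : x ∈ r.support) (i : ℕ) :
    UlmSeqOf p (Finsupp.linearCombination R id r) i ≤ UlmSeqOf p (r x • x) i := by
  rw [ulmSeqOf_linearCombination hX hr]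
  exact Finset.inf_le hx

end UlmSequences

section Modules

variable {R : Type*} [CommRing R] {M : Type u} [AddCommGroup M] [Module R M]

theorem exists_sum_smul_eq_zero_of_card_lt [Nontrivial R] {ι κ : Type*} [Fintype κ]
    {s : Finset ι} (w : ι → κ → R) (h : Fintype.card κ < s.card) :
    ∃ g : ι → R, ∑ i ∈ s, g i • w i = 0 ∧ ∃ i ∈ s, g i ≠ 0 := by
  have hdep : ¬ LinearIndepOn R w ↑s := fun hw => by
    have := hw.fintype_card_le_finrank
    simp only [Finset.coe_sort_coe, Fintype.card_coe, Module.finrank_fintype_fun_eq_card] at this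
    omega
  simpa [linearIndepOn_finset_iff] using hdep

theorem exists_smul_mem_of_subset_hull [IsDomain R] {H : Submodule R M} {T : Finset M}
    (hT : ↑T ⊆ hull H) : ∃ D : R, D ≠ 0 ∧ ∀ y ∈ T, D • y ∈ H := by
  classical
  induction T using Finset.induction_on with
  | empty => exact ⟨1, one_ne_zero, by simp⟩
  | insert y T _ ih =>
    rw [Finset.coe_insert, Set.insert_subset_iff] at hT
    obtain ⟨a, ha, hay⟩ := hT.1
    obtain ⟨D, hD, hDT⟩ := ih hT.2
    refine ⟨a * D, mul_ne_zero ha hD, fun z hz => ?_⟩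
    rcases Finset.mem_insert.mp hz with rfl | hz
    · rw [mul_comm, mul_smul]
      exact H.smul_mem D hay
    · rw [mul_smul]
      exact H.smul_mem a (hDT z hz)

end Modules

section DiscreteValuationRing

open Finsupp IsDiscreteValuationRing

variable {R : Type*} [CommRing R] [IsDomain R] [IsDiscreteValuationRing R] {ϖ : R}
  {M : Type u} [AddCommGroup M] [Module R M] {X Y : Set M} {e : ℕ → WithTop Ordinal.{u}}

theorem exists_addVal_mul_le (hX : LinearIndepOn R id X) {r B : M →₀ R}
    (hr : ↑r.support ⊆ X) (hrB : linearCombination R id r = linearCombination R id B)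
    {D : R} (hD : D ≠ 0) {c : M → M →₀ R} (hcX : ∀ y ∈ B.support, ↑(c y).support ⊆ X)
    (hc : ∀ y ∈ B.support, linearCombination R id (c y) = D • y) {x₀ : M}
    (hx₀ : x₀ ∈ r.support) :
    ∃ y ∈ B.support, addVal R (B y * c y x₀) ≤ addVal R (D * r x₀) := by
  have hexpand : ∑ y ∈ B.support, B y • c y = D • r := by
    refine linearIndepOn_iffₛ.mp hX _ ?_ _ ?_ ?_
    · exact Submodule.sum_mem _ fun y hy =>
        Submodule.smul_mem _ _ ((mem_supported _ _).mpr (hcX y hy))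
    · exact Submodule.smul_mem _ _ ((mem_supported _ _).mpr hr)
    · rw [map_sum, map_smul, hrB, linearCombination_apply, Finsupp.sum, Finset.smul_sum]
      refine Finset.sum_congr rfl fun y hy => ?_
      rw [map_smul, hc y hy, smul_comm, id]
  have hcoef : ∑ y ∈ B.support, B y * c y x₀ = D * r x₀ := by
    simpa using DFunLike.congr_fun hexpand x₀
  by_contra! hlt
  have hne : addVal R (D * r x₀) ≠ ⊤ :=
    addVal_eq_top_iff.not.mpr (mul_ne_zero hD (mem_support_iff.mp hx₀))
  exact (((addVal R).map_lt_sum hne hlt).trans_eq (congrArg _ hcoef)).false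

theorem exists_ulmSeqOf_smul_eq (hϖ : Irreducible ϖ) {a : R} (ha : a ≠ 0) :
    ∃ n : ℕ, addVal R a = n ∧ ∀ (x : M) i, UlmSeqOf ϖ (a • x) i = UlmSeqOf ϖ x (i + n) := by
  obtain ⟨n, u, rfl⟩ := eq_unit_mul_pow_irreducible ha hϖ
  exact ⟨n, addVal_def' u hϖ n, ulmSeqOf_unit_mul_pow_smul u n⟩

theorem ulmEquiv_smul (hϖ : Irreducible ϖ) {a : R} (ha : a ≠ 0) (x : M) :
    UlmEquiv (UlmSeqOf ϖ (a • x)) (UlmSeqOf ϖ x) := by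
  obtain ⟨n, -, hn⟩ := exists_ulmSeqOf_smul_eq (M := M) hϖ ha
  exact ⟨n, 0, fun i => hn x i⟩

theorem exists_mem_support_ulmEquiv (hϖ : Irreducible ϖ) (hX : IsDecompWrt ϖ X)
    (hY : IsDecompWrt ϖ Y) (hYX : Y ⊆ hull (Submodule.span R X)) (he : IsUlmSeq e)
    {r B : M →₀ R} (hr : ↑r.support ⊆ X) (hB : ↑B.support ⊆ Y)
    (hre : ∀ x ∈ r.support, UlmEquiv (UlmSeqOf ϖ x) e) (hr0 : r ≠ 0)
    (hrB : linearCombination R id r = linearCombination R id B) :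
    ∃ y ∈ B.support, UlmEquiv (UlmSeqOf ϖ y) e := by
  set z := linearCombination R id r
  obtain ⟨x₀, hx₀, N, hz⟩ := exists_inf_eventually_eq (support_nonempty_iff.mpr hr0) he.monotone
    fun x hx => (ulmEquiv_smul hϖ (mem_support_iff.mp hx) x).trans (hre x hx)
  obtain ⟨D, hD, hDX⟩ := exists_smul_mem_of_subset_hull (hB.trans hYX)
  choose! c hcX hc using fun y hy => Submodule.mem_span_set.mp (hDX y hy)
  obtain ⟨y₀, hy₀, hval⟩ := exists_addVal_mul_le hX.1 hr hrB hD (c := c) hcX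
    (fun y hy => by rw [← hc y hy, linearCombination_apply]; rfl) hx₀
  have hcy₀ : c y₀ x₀ ≠ 0 := by
    rintro h0
    rw [h0, mul_zero, addVal_zero, top_le_iff, addVal_eq_top_iff] at hval
    exact mul_ne_zero hD (mem_support_iff.mp hx₀) hval
  obtain ⟨b, hb, hBy⟩ := exists_ulmSeqOf_smul_eq (M := M) hϖ (mem_support_iff.mp hy₀)
  obtain ⟨k, hk, hcx⟩ := exists_ulmSeqOf_smul_eq (M := M) hϖ hcy₀
  obtain ⟨d, hd, hDy⟩ := exists_ulmSeqOf_smul_eq (M := M) hϖ hD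
  obtain ⟨n, hn, hrx⟩ := exists_ulmSeqOf_smul_eq (M := M) hϖ (mem_support_iff.mp hx₀)
  have hbk : b + k ≤ d + n := by
    rw [addVal_mul, addVal_mul, hb, hk, hd, hn] at hval
    exact_mod_cast hval
  refine ⟨y₀, hy₀, UlmEquiv.trans ?_ (hre x₀ hx₀)⟩
  refine ulmEquiv_of_squeeze (isUlmSeq_ulmSeqOf x₀).monotone (f := UlmSeqOf ϖ z) (N := N)
    (fun i => ?_) (fun i => ?_) (fun i hi => ?_) hbk
  · rw [← hBy, hrB]
    exact ulmSeqOf_linearCombination_le hY hB hy₀ i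
  · rw [← hDy, ← hcx, ← hc y₀ hy₀]
    exact ulmSeqOf_linearCombination_le hX (hcX y₀ hy₀) (mem_support_iff.mpr hcy₀) i
  · rw [ulmSeqOf_linearCombination hX hr, hz i hi, hrx]

theorem card_le_card_biUnion_of_isDecompWrt [DecidableEq M] (hϖ : Irreducible ϖ)
    (hX : IsDecompWrt ϖ X) (hY : IsDecompWrt ϖ Y) (hYX : Y ⊆ hull (Submodule.span R X))
    (he : IsUlmSeq e) {a : ulmClassPart ϖ e X → R} {b : ulmClassPart ϖ e X → M →₀ R}
    (ha : ∀ x, a x ≠ 0) (hbY : ∀ x, ↑(b x).support ⊆ Y) (hb : ∀ x, linearCombination R id (b x) = a x • (x : M))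
    {T : ulmClassPart ϖ e X → Finset (ulmClassPart ϖ e Y)}
    (hT : ∀ x y, y ∈ T x ↔ (y : M) ∈ (b x).support) (s : Finset (ulmClassPart ϖ e X)) :
    s.card ≤ (s.biUnion T).card := by
  by_contra! hlt
  obtain ⟨g, hg, x₀, hx₀, hgx₀⟩ := exists_sum_smul_eq_zero_of_card_lt
    (fun x (y : s.biUnion T) => b x y) (by simpa using hlt)
  let r : M →₀ R := ∑ x ∈ s, single (x : M) (g x * a x)
  let B : M →₀ R := ∑ x ∈ s, g x • b x
  have hrs : ∀ x ∈ r.support, ∃ x' ∈ s, (x' : M) = x := by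
    intro x hx
    by_contra! hxs
    refine mem_support_iff.mp hx ?_
    simp only [r, finsetSum_apply]
    exact Finset.sum_eq_zero fun x' hx' => single_eq_of_ne (hxs x' hx').symm
  have hr0 : r ≠ 0 := fun h => by
    have hx₀r := DFunLike.congr_fun h (x₀ : M)
    simp only [r, finsetSum_apply, single_apply, Subtype.val_inj, Finset.sum_ite_eq', coe_zero,
      Pi.zero_apply] at hx₀r
    rw [if_pos hx₀] at hx₀r
    exact mul_ne_zero hgx₀ (ha x₀) hx₀r
  have hB : ↑B.support ⊆ Y := by
    intro y hy
    by_contra hyY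
    refine mem_support_iff.mp hy ?_
    simp only [B, finsetSum_apply]
    refine Finset.sum_eq_zero fun x _ => ?_
    rw [Finsupp.smul_apply, notMem_support_iff.mp (fun h => hyY (hbY x h)), smul_zero]
  have hrB : linearCombination R id r = linearCombination R id B := by
    simp only [r, B, map_sum, map_smul, linearCombination_single, hb, mul_smul, id]
  obtain ⟨y, hyB, hye⟩ := exists_mem_support_ulmEquiv hϖ hX hY hYX he
    (fun x hx => by obtain ⟨x', -, rfl⟩ := hrs x hx; exact x'.2.1) hB
    (fun x hx => by obtain ⟨x', -, rfl⟩ := hrs x hx; exact x'.2.2) hr0 hrB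
  have hBy : ∑ x ∈ s, g x * b x y ≠ 0 := by simpa [B] using mem_support_iff.mp hyB
  obtain ⟨x, hx, hxy⟩ := Finset.exists_ne_zero_of_sum_ne_zero hBy
  have hyN : ⟨y, hB hyB, hye⟩ ∈ s.biUnion T :=
    Finset.mem_biUnion.mpr ⟨x, hx, (hT _ _).mpr (mem_support_iff.mpr (right_ne_zero_of_mul hxy))⟩
  exact hBy (by simpa using congr_fun hg ⟨_, hyN⟩)

theorem mk_le_mk_of_isDecompWrt (hϖ : Irreducible ϖ) (hX : IsDecompWrt ϖ X)
    (hY : IsDecompWrt ϖ Y) (hXY : X ⊆ hull (Submodule.span R Y))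
    (hYX : Y ⊆ hull (Submodule.span R X)) (he : IsUlmSeq e) :
    Cardinal.mk (ulmClassPart ϖ e X) ≤ Cardinal.mk (ulmClassPart ϖ e Y) := by
  classical
  have hexpand (x : ulmClassPart ϖ e X) : ∃ a : R, ∃ b : M →₀ R,
      a ≠ 0 ∧ ↑b.support ⊆ Y ∧ linearCombination R id b = a • (x : M) := by
    obtain ⟨a, ha, hax⟩ := hXY x.2.1
    obtain ⟨b, hbY, hb⟩ := Submodule.mem_span_set.mp hax
    exact ⟨a, b, ha, hbY, by rw [← hb, linearCombination_apply]; rfl⟩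
  choose a b ha hbY hb using hexpand
  let T x := (b x).support.subtype (· ∈ ulmClassPart ϖ e Y)
  obtain ⟨f, hf, -⟩ := (Finset.all_card_le_biUnion_card_iff_exists_injective T).mp
    (card_le_card_biUnion_of_isDecompWrt hϖ hX hY hYX he ha hbY hb fun _ _ => Finset.mem_subtype)
  exact Cardinal.mk_le_of_injective hf

end DiscreteValuationRing

end UlmW

section Localization

variable (p : ℤ) [hp : Fact (Prime p)]

instance Zp.instIsDiscreteValuationRing : IsDiscreteValuationRing (Zp p) :=
  IsLocalization.AtPrime.isDiscreteValuationRing_of_dedekind_domain ℤ (P := Ideal.span {p})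
    (by simpa [Ideal.span_singleton_eq_bot] using hp.out.ne_zero) (Zp p)

theorem Zp.irreducible_intCast : Irreducible (p : Zp p) := by
  refine IsDiscreteValuationRing.irreducible_of_span_eq_maximalIdeal _ ?_ ?_
  · have hinj := IsLocalization.injective (Zp p)
      (Ideal.span {p} : Ideal ℤ).primeCompl_le_nonZeroDivisors
    simpa using hinj.ne hp.out.ne_zero
  · rw [← Localization.AtPrime.map_eq_maximalIdeal, Ideal.map_span, Set.image_singleton]
    simp

end Localization

theorem statement_19 (p : ℤ) [Fact (Prime p)] {G : Type u} [AddCommGroup G]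
    [Module (Zp p) G]
    (X Y : Set G)
    (hX : IsDecompWrt (p : Zp p) X)
    (hXbasis : ∀ g : G, ∃ a : Zp p, a ≠ 0 ∧ a • g ∈ Submodule.span (Zp p) X)
    (hY : IsDecompWrt (p : Zp p) Y)
    (hYbasis : ∀ g : G, ∃ a : Zp p, a ≠ 0 ∧ a • g ∈ Submodule.span (Zp p) Y)
    (e : ℕ → WithTop Ordinal.{u}) (he : IsUlmSeq e) :
    Cardinal.mk {z : G // z ∈ X ∧ UlmEquiv (UlmSeqOf (p : Zp p) z) e} =
      Cardinal.mk {z : G // z ∈ Y ∧ UlmEquiv (UlmSeqOf (p : Zp p) z) e} :=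
  le_antisymm
    (mk_le_mk_of_isDecompWrt (Zp.irreducible_intCast p) hX hY (fun x _ => hYbasis x)
      (fun y _ => hXbasis y) he)
    (mk_le_mk_of_isDecompWrt (Zp.irreducible_intCast p) hY hX (fun y _ => hXbasis y)
      (fun x _ => hYbasis x) he)

end
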